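/- Let s ∈ ℂ and y ∈ ℝ³. The function u(x) = Φ_s(x,y) = e^{i s ‖x−y‖}/(4π ‖x−y‖) is twice continuously differentiable on ℝ³ \ {y} and satisfies the Helmholtz equation Δu(x) + s² u(x) = 0 for every x ≠ y, where Δ denotes the Laplacian (the sum of the second partial derivatives with respect to the coordinates of x). -/

import Mathlib

open MeasureTheory

/-- The Laplace-domain fundamental solution of the Helmholtz equation in ℝ³:
`Φ_s(x,y) = exp(i s ‖x−y‖) / (4π ‖x−y‖)`. -/
noncomputable def Phi (s : ℂ) (x y : EuclideanSpace ℝ (Fin 3)) : ℂ :=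
  Complex.exp (Complex.I * s * (‖x - y‖ : ℂ)) / ((4 * Real.pi * ‖x - y‖ : ℝ) : ℂ)

/-- The Laplacian of `u : ℝ³ → ℂ` at `x`: the sum of the second derivatives of `u` along the
coordinate directions. -/
noncomputable def lap (u : EuclideanSpace ℝ (Fin 3) → ℂ) (x : EuclideanSpace ℝ (Fin 3)) : ℂ :=
  ∑ i : Fin 3, iteratedDeriv 2 (fun t : ℝ => u (x + t • EuclideanSpace.single i (1 : ℝ))) 0
/-!
`Φ_s(·, y)` is the radial function `x ↦ f ‖x - y‖` with profile `f r = e^{isr} / (4πr)`.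
Along a line `t ↦ v + t e` the chain rule gives the second derivative of `f ‖v + t e‖`
in terms of `f'` and `f''`; summing over an orthonormal basis of `ℝⁿ` yields the radial
Laplacian `f'' + (n - 1)/r · f'`. The profile satisfies `f' = (is - 1/r) f`, hence
`f'' = (1/r² + (is - 1/r)²) f`, and for `n = 3` this makes `f'' + (2/r) f' + s² f` vanish.
-/

open Complex Filter Topology
open scoped RealInnerProductSpace

section Radial

variable {E F : Type*} [NormedAddCommGroup E] [InnerProductSpace ℝ E]
  [NormedAddCommGroup F] [NormedSpace ℝ F]

theorem HasDerivAt.norm {g : ℝ → E} {g' : E} {t : ℝ} (hg : HasDerivAt g g' t) (h0 : g t ≠ 0) :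
    HasDerivAt (fun u => ‖g u‖) (⟪g t, g'⟫ / ‖g t‖) t := by
  have hpos : 0 < ‖g t‖ := norm_pos_iff.2 h0
  have := hg.norm_sq.sqrt (by positivity)
  simp only [Real.sqrt_sq (norm_nonneg _)] at this
  convert this using 1
  field_simp

theorem hasDerivAt_norm_add_smul {v e : E} {t : ℝ} (h0 : v + t • e ≠ 0) :
    HasDerivAt (fun u : ℝ => ‖v + u • e‖) ((⟪v, e⟫ + t * ‖e‖ ^ 2) / ‖v + t • e‖) t := by
  have hline : HasDerivAt (fun u : ℝ => v + u • e) e t := by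
    simpa using ((hasDerivAt_id t).smul_const e).const_add v
  convert hline.norm h0 using 2
  rw [inner_add_left, real_inner_smul_left, real_inner_self_eq_norm_sq]

theorem deriv_norm_add_smul {v : E} (hv : v ≠ 0) (e : E) :
    deriv (fun t : ℝ => ‖v + t • e‖) 0 = ⟪v, e⟫ / ‖v‖ := by
  simpa using (hasDerivAt_norm_add_smul (e := e) (t := 0) (by simpa using hv)).deriv

theorem iteratedDeriv_two_norm_add_smul {v : E} (hv : v ≠ 0) (e : E) :
    iteratedDeriv 2 (fun t : ℝ => ‖v + t • e‖) 0 = ‖e‖ ^ 2 / ‖v‖ - ⟪v, e⟫ ^ 2 / ‖v‖ ^ 3 := by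
  have hne : ∀ᶠ t in 𝓝 (0 : ℝ), v + t • e ≠ 0 :=
    (by fun_prop : Continuous fun t : ℝ => v + t • e).continuousAt.eventually_ne (by simpa using hv)
  have hderiv : deriv (fun t : ℝ => ‖v + t • e‖) =ᶠ[𝓝 0]
      fun t => (⟪v, e⟫ + t * ‖e‖ ^ 2) / ‖v + t • e‖ :=
    hne.mono fun t ht => (hasDerivAt_norm_add_smul ht).deriv
  have hnum : HasDerivAt (fun t : ℝ => ⟪v, e⟫ + t * ‖e‖ ^ 2) (‖e‖ ^ 2) 0 := by
    simpa using ((hasDerivAt_id (0 : ℝ)).mul_const (‖e‖ ^ 2)).const_add ⟪v, e⟫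
  have hden : HasDerivAt (fun t : ℝ => ‖v + t • e‖) (⟪v, e⟫ / ‖v‖) 0 := by
    simpa using hasDerivAt_norm_add_smul (e := e) (t := 0) (by simpa using hv)
  have hv' : ‖v‖ ≠ 0 := norm_ne_zero_iff.2 hv
  rw [iteratedDeriv_succ, iteratedDeriv_one, hderiv.deriv_eq]
  refine (hnum.div hden (by simpa using hv')).deriv.trans ?_
  simp only [zero_mul, add_zero, zero_smul]
  field_simp

theorem iteratedDeriv_two_comp_norm_add_smul {f : ℝ → F} {v : E} (hv : v ≠ 0) (e : E)
    (hf : ContDiffAt ℝ 2 f ‖v‖) :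
    iteratedDeriv 2 (fun t : ℝ => f ‖v + t • e‖) 0 =
      (⟪v, e⟫ / ‖v‖) ^ 2 • iteratedDeriv 2 f ‖v‖ +
        (‖e‖ ^ 2 / ‖v‖ - ⟪v, e⟫ ^ 2 / ‖v‖ ^ 3) • deriv f ‖v‖ := by
  have hρ : ContDiffAt ℝ 2 (fun t : ℝ => ‖v + t • e‖) 0 :=
    ContDiffAt.norm ℝ (by fun_prop) (by simpa using hv)
  have := iteratedDeriv_scomp_two (g := f) (by simpa using hf) hρ
  rw [deriv_norm_add_smul hv, iteratedDeriv_two_norm_add_smul hv, zero_smul, add_zero] at this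
  exact this

theorem OrthonormalBasis.sum_iteratedDeriv_two_comp_norm_add_smul {ι : Type*} [Fintype ι]
    (b : OrthonormalBasis ι ℝ E) {f : ℝ → F} {v : E} (hv : v ≠ 0) (hf : ContDiffAt ℝ 2 f ‖v‖) :
    ∑ i, iteratedDeriv 2 (fun t : ℝ => f ‖v + t • b i‖) 0 =
      iteratedDeriv 2 f ‖v‖ + ((Fintype.card ι - 1) / ‖v‖) • deriv f ‖v‖ := by
  have hv' : ‖v‖ ≠ 0 := norm_ne_zero_iff.2 hv
  have hsq : ∑ i, (⟪v, b i⟫ / ‖v‖) ^ 2 = 1 := by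
    simp_rw [div_pow, ← Finset.sum_div, b.sum_sq_inner_left]
    field_simp
  have hcoeff : ∑ i, (‖b i‖ ^ 2 / ‖v‖ - ⟪v, b i⟫ ^ 2 / ‖v‖ ^ 3) = (Fintype.card ι - 1) / ‖v‖ := by
    simp only [b.orthonormal.1, Finset.sum_sub_distrib, ← Finset.sum_div, b.sum_sq_inner_left]
    simp only [one_pow, Finset.sum_const, Finset.card_univ, nsmul_eq_mul, mul_one]
    field_simp
  simp_rw [iteratedDeriv_two_comp_norm_add_smul hv _ hf, Finset.sum_add_distrib,
    ← Finset.sum_smul, hsq, hcoeff, one_smul]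

end Radial

theorem lap_comp_norm_sub {f : ℝ → ℂ} {x y : EuclideanSpace ℝ (Fin 3)} (hxy : x ≠ y)
    (hf : ContDiffAt ℝ 2 f ‖x - y‖) :
    lap (fun x' => f ‖x' - y‖) x = iteratedDeriv 2 f ‖x - y‖ + (2 / ‖x - y‖) • deriv f ‖x - y‖ := by
  have := (EuclideanSpace.basisFun (Fin 3) ℝ).sum_iteratedDeriv_two_comp_norm_add_smul
    (sub_ne_zero.2 hxy) hf
  simp only [EuclideanSpace.basisFun_apply, Fintype.card_fin] at this
  rw [show ((3 : ℕ) : ℝ) - 1 = 2 by norm_num] at this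
  simp only [lap, add_sub_right_comm x, this]

noncomputable def helmholtzProfile (s : ℂ) (r : ℝ) : ℂ :=
  cexp (I * s * r) / ((4 * Real.pi * r : ℝ) : ℂ)

theorem ofReal_four_pi_mul_ne_zero {r : ℝ} (hr : r ≠ 0) : ((4 * Real.pi * r : ℝ) : ℂ) ≠ 0 := by
  have := Real.pi_pos.ne'
  exact_mod_cast (by positivity : 4 * Real.pi * r ≠ 0)

theorem Phi_eq_helmholtzProfile (s : ℂ) (x y : EuclideanSpace ℝ (Fin 3)) :
    Phi s x y = helmholtzProfile s ‖x - y‖ := rfl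

theorem hasDerivAt_helmholtzProfile (s : ℂ) {r : ℝ} (hr : r ≠ 0) :
    HasDerivAt (helmholtzProfile s) ((I * s - (r : ℂ)⁻¹) * helmholtzProfile s r) r := by
  have hnum : HasDerivAt (fun r : ℝ => cexp (I * s * r)) (cexp (I * s * r) * (I * s)) r := by
    simpa using ((hasDerivAt_id r).ofReal_comp.const_mul (I * s)).cexp
  have hden : HasDerivAt (fun r : ℝ => ((4 * Real.pi * r : ℝ) : ℂ)) (4 * Real.pi) r := by
    simpa using ((hasDerivAt_id r).const_mul (4 * Real.pi)).ofReal_comp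
  refine (hnum.div hden (ofReal_four_pi_mul_ne_zero hr)).congr_deriv ?_
  have : (r : ℂ) ≠ 0 := by exact_mod_cast hr
  simp only [helmholtzProfile]
  push_cast
  field_simp

theorem contDiffAt_helmholtzProfile (s : ℂ) {r : ℝ} (hr : r ≠ 0) {n : WithTop ℕ∞} :
    ContDiffAt ℝ n (helmholtzProfile s) r := by
  have hnum : ContDiffAt ℝ n (fun r : ℝ => cexp (I * s * r)) r :=
    (contDiff_const.mul ofRealCLM.contDiff).cexp.contDiffAt
  have hden : ContDiffAt ℝ n (fun r : ℝ => ((4 * Real.pi * r : ℝ) : ℂ)) r :=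
    (ofRealCLM.contDiff.comp (contDiff_const.mul contDiff_id)).contDiffAt
  refine (hnum.mul (hden.inv (ofReal_four_pi_mul_ne_zero hr))).congr_of_eventuallyEq (.of_eq ?_)
  funext r
  exact div_eq_mul_inv _ _

theorem deriv_helmholtzProfile (s : ℂ) {r : ℝ} (hr : r ≠ 0) :
    deriv (helmholtzProfile s) r = (I * s - (r : ℂ)⁻¹) * helmholtzProfile s r :=
  (hasDerivAt_helmholtzProfile s hr).deriv

theorem iteratedDeriv_two_helmholtzProfile (s : ℂ) {r : ℝ} (hr : r ≠ 0) :
    iteratedDeriv 2 (helmholtzProfile s) r =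
      ((r : ℂ)⁻¹ ^ 2 + (I * s - (r : ℂ)⁻¹) ^ 2) * helmholtzProfile s r := by
  have hderiv : deriv (helmholtzProfile s) =ᶠ[𝓝 r]
      fun r : ℝ => (I * s - (r : ℂ)⁻¹) * helmholtzProfile s r :=
    (eventually_ne_nhds hr).mono fun r hr => deriv_helmholtzProfile s hr
  have hcoeff : HasDerivAt (fun r : ℝ => I * s - (r : ℂ)⁻¹) ((r : ℂ)⁻¹ ^ 2) r := by
    have := ((hasDerivAt_id r).ofReal_comp.inv (by exact_mod_cast hr)).const_sub (I * s)
    simpa [inv_pow, neg_div, one_div] using this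
  rw [iteratedDeriv_succ, iteratedDeriv_one, hderiv.deriv_eq]
  exact ((hcoeff.mul (hasDerivAt_helmholtzProfile s hr)).congr_deriv (by ring)).deriv

theorem helmholtzProfile_radial_ode (s : ℂ) {r : ℝ} (hr : r ≠ 0) :
    iteratedDeriv 2 (helmholtzProfile s) r + (2 / r) • deriv (helmholtzProfile s) r +
      s ^ 2 * helmholtzProfile s r = 0 := by
  rw [iteratedDeriv_two_helmholtzProfile s hr, deriv_helmholtzProfile s hr, Complex.real_smul]
  push_cast
  linear_combination (s ^ 2 * helmholtzProfile s r) * I_sq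

/-- For `s ∈ ℂ` and `y ∈ ℝ³`, the function `u(x) = Φ_s(x,y)` is twice
continuously differentiable on `ℝ³ \ {y}` and satisfies `Δu + s²u = 0` there. -/
theorem stmt5 (s : ℂ) (y : EuclideanSpace ℝ (Fin 3)) :
    ContDiffOn ℝ 2 (fun x => Phi s x y) {y}ᶜ ∧
    ∀ x : EuclideanSpace ℝ (Fin 3), x ≠ y →
      lap (fun x' => Phi s x' y) x + s ^ 2 * Phi s x y = 0 := by
  have hprofile : ∀ x, x ≠ y → ContDiffAt ℝ 2 (helmholtzProfile s) ‖x - y‖ := fun x hx =>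
    contDiffAt_helmholtzProfile s (norm_ne_zero_iff.2 (sub_ne_zero.2 hx))
  simp only [Phi_eq_helmholtzProfile]
  refine ⟨fun x hx => ?_, fun x hx => ?_⟩
  · have hdist : ContDiffAt ℝ 2 (fun x => ‖x - y‖) x :=
      (contDiffAt_id.sub contDiffAt_const).norm ℝ (sub_ne_zero.2 hx)
    exact ((hprofile x hx).comp x hdist).contDiffWithinAt
  · rw [lap_comp_norm_sub hx (hprofile x hx)]
    exact helmholtzProfile_radial_ode s (norm_ne_zero_iff.2 (sub_ne_zero.2 hx))
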